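/- Let T, L, P > 0, n ∈ ℕ with n ≥ 1, and let (h,t,ρ) be a discretization with t = Σ₊h (i.e. t_k = Σ_{j=1}^k h_j for all k ∈ [0,n]) and ρ_j = 2LP h_j² for all j ∈ [1,n]. Then for every k ∈ [0,n], the quantity ΔE(h,t,ρ;k) := E(ψ[h,t,ρ;k]) − E(h,t,ρ) satisfies: ΔE(h,t,ρ;0) = −(3 e^{LT}/8) ρ_0, and ΔE(h,t,ρ;k) = −e^{L(T−t_k)} (e^{L h_k} − 1) (P h_k + (3/4) L P h_k²) for k ∈ [1,n]. -/

import Mathlib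

noncomputable section

/-- The local error term `𝓔_j(h,t,ρ)` of the Euler scheme error bound:
`𝓔_0 = e^{LT} ρ_0/2` and `𝓔_j = e^{L(T-t_j)}(e^{L h_j}-1)(P h_j + ρ_j/2 + ρ_j/(2 L h_j))`. -/
def calE (T L P : ℝ) (h t ρ : ℕ → ℝ) (j : ℕ) : ℝ :=
  if j = 0 then Real.exp (L * T) * ρ 0 / 2
  else Real.exp (L * (T - t j)) * (Real.exp (L * h j) - 1) *
    (P * h j + ρ j / 2 + ρ j / (2 * L * h j))

/-- The error bound `E(h,t,ρ) = ∑_{j=0}^n 𝓔_j(h,t,ρ)` for a discretization of length `n`. -/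
def Ebound (T L P : ℝ) (n : ℕ) (h t ρ : ℕ → ℝ) : ℝ :=
  ∑ j ∈ Finset.range (n + 1), calE T L P h t ρ j

/-- The `h`-component of the subdivision rule `ψ[h,t,ρ;k]`: for `k = 0` the step
sizes are unchanged, for `k ∈ [1,n]` the entry `h_k` is replaced by the two
entries `h_k/2, h_k/2` and later entries are shifted. -/
def psiH (h : ℕ → ℝ) (k : ℕ) : ℕ → ℝ := fun j =>
  if k = 0 then h j
  else if j < k then h j
  else if j ≤ k + 1 then h k / 2
  else h (j - 1)

/-- The `t`-component of the subdivision rule `ψ[h,t,ρ;k]`: for `k = 0` the nodes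
are unchanged, for `k ∈ [1,n]` the node `t_k - h_k/2` is inserted between
`t_{k-1}` and `t_k`. -/
def psiT (h t : ℕ → ℝ) (k : ℕ) : ℕ → ℝ := fun j =>
  if k = 0 then t j
  else if j < k then t j
  else if j = k then t k - h k / 2
  else t (j - 1)

/-- The `ρ`-component of the subdivision rule `ψ[h,t,ρ;k]`: for `k = 0` the entry
`ρ_0` is replaced by `ρ_0/4`, for `k ∈ [1,n]` the entry `ρ_k` is replaced by the
two entries `ρ_k/4, ρ_k/4` and later entries are shifted. -/
def psiRho (ρ : ℕ → ℝ) (k : ℕ) : ℕ → ℝ := fun j =>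
  if k = 0 then (if j = 0 then ρ 0 / 4 else ρ j)
  else if j < k then ρ j
  else if j ≤ k + 1 then ρ k / 4
  else ρ (j - 1)

/-- The length of the discretization produced by `ψ[h,t,ρ;k]` from one of length `n`:
`n` if `k = 0`, and `n + 1` otherwise. -/
def newn (n k : ℕ) : ℕ := if k = 0 then n else n + 1

/-- `ΔE(h,t,ρ;k) = E(ψ[h,t,ρ;k]) - E(h,t,ρ)`. -/
def deltaE (T L P : ℝ) (n : ℕ) (h t ρ : ℕ → ℝ) (k : ℕ) : ℝ :=
  Ebound T L P (newn n k) (psiH h k) (psiT h t k) (psiRho ρ k) - Ebound T L P n h t ρ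

/-- The cost estimator `C(h,t,ρ) = ∑_{j=0}^{n-1} (v_R(t_j)/ρ_j^{d_R}) ·
(v_F(t_j) h_{j+1}^{d_F} / ρ_{j+1}^{d_F})`. -/
def costC (dR dF : ℕ) (vR vF : ℝ → ℝ) (n : ℕ) (h t ρ : ℕ → ℝ) : ℝ :=
  ∑ j ∈ Finset.range n,
    (vR (t j) / ρ j ^ dR) * (vF (t j) * h (j + 1) ^ dF / ρ (j + 1) ^ dF)

/-- `ΔC(h,t,ρ;k) = C(ψ[h,t,ρ;k]) - C(h,t,ρ)`. -/
def deltaC (dR dF : ℕ) (vR vF : ℝ → ℝ) (n : ℕ) (h t ρ : ℕ → ℝ) (k : ℕ) : ℝ :=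
  costC dR dF vR vF (newn n k) (psiH h k) (psiT h t k) (psiRho ρ k) -
    costC dR dF vR vF n h t ρ

theorem stmt_4 (T L P : ℝ) (hT : 0 < T) (hL : 0 < L) (hP : 0 < P)
    (n : ℕ) (hn : 1 ≤ n) (h t ρ : ℕ → ℝ)
    (hh : ∀ j, 1 ≤ j → j ≤ n → 0 < h j)
    (htnn : ∀ j, j ≤ n → 0 ≤ t j)
    (hρ : ∀ j, j ≤ n → 0 < ρ j)
    (hcum : ∀ k, k ≤ n → t k = ∑ j ∈ Finset.Icc 1 k, h j)
    (hcoup : ∀ j, 1 ≤ j → j ≤ n → ρ j = 2 * L * P * (h j) ^ 2) :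
    deltaE T L P n h t ρ 0 = -(3 * Real.exp (L * T) / 8) * ρ 0 ∧
    ∀ k, 1 ≤ k → k ≤ n → deltaE T L P n h t ρ k =
      -(Real.exp (L * (T - t k)) * (Real.exp (L * h k) - 1) *
        (P * h k + 3 / 4 * (L * P * (h k) ^ 2))) := by
  constructor
  · -- k = 0 case
    simp only [deltaE, newn, reduceIte, Ebound]
    rw [Finset.sum_range_succ', Finset.sum_range_succ']
    rw [Finset.sum_congr rfl (fun j _ => by
      simp [calE, psiH, psiT, psiRho] :
      ∀ j ∈ Finset.range n, calE T L P (psiH h 0) (psiT h t 0) (psiRho ρ 0) (j+1)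
        = calE T L P h t ρ (j+1))]
    have h1 : calE T L P (psiH h 0) (psiT h t 0) (psiRho ρ 0) 0
        = Real.exp (L * T) * (ρ 0 / 4) / 2 := by simp [calE, psiRho]
    have h2 : calE T L P h t ρ 0 = Real.exp (L * T) * ρ 0 / 2 := by simp [calE]
    rw [h1, h2]; ring
  · intro k hk1 hkn
    have hk0 : k ≠ 0 := by omega
    have hhk := hh k hk1 hkn
    set F := calE T L P (psiH h k) (psiT h t k) (psiRho ρ k) with hF
    set G := calE T L P h t ρ with hG
    have hFG_lt : ∀ j, j < k → F j = G j := by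
      intro j hj
      by_cases h0 : j = 0
      · subst h0; simp [hF, hG, calE, psiRho, hk0, hj]
      · simp only [hF, hG, calE, if_neg h0]
        rw [show psiH h k j = h j by unfold psiH; rw [if_neg hk0, if_pos hj],
            show psiT h t k j = t j by unfold psiT; rw [if_neg hk0, if_pos hj],
            show psiRho ρ k j = ρ j by unfold psiRho; rw [if_neg hk0, if_pos hj]]
    have hFG_gt : ∀ j, k + 1 < j → F j = G (j - 1) := by
      intro j hj
      have hj0 : j ≠ 0 := by omega
      have hj10 : j - 1 ≠ 0 := by omega
      simp only [hF, hG, calE, if_neg hj0, if_neg hj10]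
      rw [show psiH h k j = h (j-1) by
            unfold psiH; rw [if_neg hk0, if_neg (by omega), if_neg (by omega)],
          show psiT h t k j = t (j-1) by
            unfold psiT; rw [if_neg hk0, if_neg (by omega), if_neg (by omega)],
          show psiRho ρ k j = ρ (j-1) by
            unfold psiRho; rw [if_neg hk0, if_neg (by omega), if_neg (by omega)]]
    have splitNew : ∑ j ∈ Finset.range (n+2), F j
        = ((∑ j ∈ Finset.range k, F j) + F k + F (k+1))
          + ∑ j ∈ Finset.Ico (k+2) (n+2), F j := by
      rw [Finset.range_eq_Ico,
        ← Finset.sum_Ico_consecutive F (Nat.zero_le (k+2)) (by omega : k+2 ≤ n+2)]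
      congr 1
      rw [show k + 2 = (k+1) + 1 from rfl,
        Finset.sum_Ico_succ_top (by omega : 0 ≤ k+1),
        Finset.sum_Ico_succ_top (by omega : 0 ≤ k), Finset.range_eq_Ico]
    have splitOld : ∑ j ∈ Finset.range (n+1), G j
        = ((∑ j ∈ Finset.range k, G j) + G k)
          + ∑ j ∈ Finset.Ico (k+1) (n+1), G j := by
      rw [Finset.range_eq_Ico,
        ← Finset.sum_Ico_consecutive G (Nat.zero_le (k+1)) (by omega : k+1 ≤ n+1)]
      congr 1
      rw [Finset.sum_Ico_succ_top (by omega : 0 ≤ k), Finset.range_eq_Ico]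
    have shift : ∑ j ∈ Finset.Ico (k+2) (n+2), F j
        = ∑ j ∈ Finset.Ico (k+1) (n+1), G j := by
      rw [Finset.sum_Ico_eq_sum_range, Finset.sum_Ico_eq_sum_range,
        show n + 2 - (k + 2) = n - k by omega, show n + 1 - (k + 1) = n - k by omega]
      refine Finset.sum_congr rfl fun j _ => ?_
      rw [hFG_gt (k + 2 + j) (by omega)]
      congr 1
      omega
    have hsame : ∑ j ∈ Finset.range k, F j = ∑ j ∈ Finset.range k, G j :=
      Finset.sum_congr rfl fun j hj => hFG_lt j (Finset.mem_range.mp hj)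
    have key : deltaE T L P n h t ρ k = F k + F (k+1) - G k := by
      simp only [deltaE, newn, if_neg hk0, Ebound, ← hF, ← hG]
      rw [show n + 1 + 1 = n + 2 from rfl, splitNew, splitOld, shift, hsame]
      ring
    rw [key]
    have hFk : F k = Real.exp (L * (T - (t k - h k / 2))) * (Real.exp (L * (h k / 2)) - 1)
        * (P * (h k / 2) + (ρ k / 4) / 2 + (ρ k / 4) / (2 * L * (h k / 2))) := by
      simp only [hF, calE, if_neg hk0]
      rw [show psiH h k k = h k / 2 by
            unfold psiH; rw [if_neg hk0, if_neg (by omega), if_pos (by omega)],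
          show psiT h t k k = t k - h k / 2 by
            unfold psiT; rw [if_neg hk0, if_neg (by omega), if_pos rfl],
          show psiRho ρ k k = ρ k / 4 by
            unfold psiRho; rw [if_neg hk0, if_neg (by omega), if_pos (by omega)]]
    have hFk1 : F (k+1) = Real.exp (L * (T - t k)) * (Real.exp (L * (h k / 2)) - 1)
        * (P * (h k / 2) + (ρ k / 4) / 2 + (ρ k / 4) / (2 * L * (h k / 2))) := by
      simp only [hF, calE, if_neg (by omega : k + 1 ≠ 0)]
      rw [show psiH h k (k+1) = h k / 2 by
            unfold psiH; rw [if_neg hk0, if_neg (by omega), if_pos (by omega)],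
          show psiT h t k (k+1) = t k by
            unfold psiT; rw [if_neg hk0, if_neg (by omega), if_neg (by omega)]
            norm_num,
          show psiRho ρ k (k+1) = ρ k / 4 by
            unfold psiRho; rw [if_neg hk0, if_neg (by omega), if_pos (by omega)]]
    have hGk : G k = Real.exp (L * (T - t k)) * (Real.exp (L * h k) - 1)
        * (P * h k + ρ k / 2 + ρ k / (2 * L * h k)) := by
      simp only [hG, calE, if_neg hk0]
    rw [hFk, hFk1, hGk, hcoup k hk1 hkn,
      show L * (T - (t k - h k / 2)) = L * (T - t k) + L * (h k / 2) by ring,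
      Real.exp_add,
      show L * h k = L * (h k / 2) + L * (h k / 2) by ring, Real.exp_add]
    field_simp
    ring
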